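/- arXiv:1803.01571 — 2 statements merged into one kernel-verified Lean document; each statement's English description precedes it below -/
import Mathlib

section
/- Let C_φ be a cutting for a knowledge base T and a sentence φ. If Mod(φ') ⊆ Mod(φ) and Mod(T ∪ {φ'}) ≠ Triv, then C_{φ'} = {𝕄 ∩ Mod(φ') | 𝕄 ∈ C_φ, 𝕄 ∩ Mod(φ') ≠ Triv} is a cutting for T and φ'. -/
variable {Sen M : Type*}

/-- The class of models of a set of sentences in a satisfaction system. -/
def ModS (sat : M → Sen → Prop) (T : Set Sen) : Set M := {m | ∀ φ ∈ T, sat m φ}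

/-- The trivial models: those satisfying every sentence. -/
def TrivS (sat : M → Sen → Prop) : Set M := {m | ∀ φ : Sen, sat m φ}

/-- A cutting for a knowledge base `T` and a sentence `φ`. -/
structure IsCutting (sat : M → Sen → Prop) (T : Set Sen) (φ : Sen) (C : Set (Set M)) : Prop where
  subset_mod : ∀ A ∈ C, A ⊆ ModS sat (T ∪ {φ})
  triv_lt : ∀ A ∈ C, TrivS sat ⊂ A
  union_closed : ∀ S ⊆ C, S.Nonempty → ⋃₀ S ∈ C
  top_mem : ModS sat (T ∪ {φ}) ∈ C
  wf : C.WellFoundedOn (fun A B => A ⊂ B)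

/-- The set of ⊆-minimal elements of a family of sets. -/
def MinCut (C : Set (Set M)) : Set (Set M) := {A ∈ C | ∀ B ∈ C, ¬ B ⊂ A}

/-- The explanatory relation based on a cutting `C` (for the observation whose cutting is `C`):
`ψ` is an explanation iff `Mod(T ∪ {ψ}) ≠ Triv` and `Mod(T ∪ {ψ})` is contained in some
minimal element of `C`. -/
def ExplRel (sat : M → Sen → Prop) (T : Set Sen) (C : Set (Set M)) (ψ : Sen) : Prop :=
  ModS sat (T ∪ {ψ}) ≠ TrivS sat ∧ ∃ A ∈ MinCut C, ModS sat (T ∪ {ψ}) ⊆ A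

section Trace

variable {α : Type*} (C : Set (Set α)) (N : Set α)

/-- The largest member of `C` (when `C` is closed under unions) whose trace on `N` lies in `B`. -/
def traceHull (B : Set α) : Set α := ⋃₀ {A ∈ C | A ∩ N ⊆ B}

variable {C N}

lemma traceHull_mono {B B' : Set α} (h : B ⊆ B') : traceHull C N B ⊆ traceHull C N B' :=
  Set.sUnion_subset_sUnion fun _ hA => ⟨hA.1, hA.2.trans h⟩

lemma traceHull_inter_subset (B : Set α) : traceHull C N B ∩ N ⊆ B := by
  rintro x ⟨⟨A, ⟨-, hAB⟩, hxA⟩, hxN⟩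
  exact hAB ⟨hxA, hxN⟩

lemma traceHull_inter_eq {B : Set α} (hB : B ∈ (· ∩ N) '' C) : traceHull C N B ∩ N = B := by
  obtain ⟨A, hA, rfl⟩ := hB
  refine (traceHull_inter_subset _).antisymm fun x hx => ⟨?_, hx.2⟩
  exact ⟨A, ⟨hA, le_rfl⟩, hx.1⟩

lemma traceHull_mem (hC : ∀ S ⊆ C, S.Nonempty → ⋃₀ S ∈ C) {B : Set α}
    (hB : B ∈ (· ∩ N) '' C) : traceHull C N B ∈ C := by
  obtain ⟨A, hA, rfl⟩ := hB
  exact hC _ (fun _ hA' => hA'.1) ⟨A, hA, le_rfl⟩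

lemma sUnion_mem_image_inter (hC : ∀ S ⊆ C, S.Nonempty → ⋃₀ S ∈ C)
    {S : Set (Set α)} (hS : S ⊆ (· ∩ N) '' C) (hne : S.Nonempty) :
    ⋃₀ S ∈ (· ∩ N) '' C := by
  refine ⟨⋃₀ (traceHull C N '' S), hC _ ?_ (hne.image _), ?_⟩
  · rintro _ ⟨B, hB, rfl⟩
    exact traceHull_mem hC (hS hB)
  · change (⋃₀ (traceHull C N '' S)) ∩ N = _
    rw [Set.sUnion_image, Set.iUnion₂_inter, Set.sUnion_eq_biUnion]
    exact Set.iUnion₂_congr fun B hB => traceHull_inter_eq (hS hB)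

/-- `traceHull` lifts strict chains of traces to strict chains in `C`. -/
lemma wellFoundedOn_image_inter (hC : ∀ S ⊆ C, S.Nonempty → ⋃₀ S ∈ C)
    (hwf : C.WellFoundedOn (· ⊂ ·)) :
    ((· ∩ N) '' C).WellFoundedOn (· ⊂ ·) := by
  refine (hwf.mapsTo (traceHull C N) fun B hB => traceHull_mem hC hB).mono' ?_
  intro B hB B' hB' hlt
  refine ⟨traceHull_mono hlt.1, fun hle => hlt.2 ?_⟩
  calc B' = traceHull C N B' ∩ N := (traceHull_inter_eq hB').symm
    _ ⊆ traceHull C N B ∩ N := Set.inter_subset_inter_left N hle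
    _ ⊆ B := traceHull_inter_subset B

end Trace

section Satisfaction

variable (sat : M → Sen → Prop)

lemma ModS_union (S U : Set Sen) : ModS sat (S ∪ U) = ModS sat S ∩ ModS sat U := by
  ext m
  simp only [ModS, Set.mem_union, or_imp, forall_and, Set.mem_ofPred_eq, Set.mem_inter_iff]

lemma TrivS_subset_ModS (S : Set Sen) : TrivS sat ⊆ ModS sat S :=
  fun _ hm φ _ => hm φ

lemma ModS_union_singleton_inter {T : Set Sen} {φ φ' : Sen}
    (h : ModS sat {φ'} ⊆ ModS sat {φ}) :
    ModS sat (T ∪ {φ}) ∩ ModS sat {φ'} = ModS sat (T ∪ {φ'}) := by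
  rw [ModS_union, ModS_union, Set.inter_assoc, Set.inter_eq_right.mpr h]

end Satisfaction

theorem stmt_6_general (sat : M → Sen → Prop) (T : Set Sen)
    (φ φ' : Sen) (Cφ : Set (Set M)) (hC : IsCutting sat T φ Cφ)
    (h1 : ModS sat {φ'} ⊆ ModS sat {φ})
    (h2 : ModS sat (T ∪ {φ'}) ≠ TrivS sat) :
    IsCutting sat T φ'
      {B | ∃ A ∈ Cφ, B = A ∩ ModS sat {φ'} ∧ A ∩ ModS sat {φ'} ≠ TrivS sat} := by
  set N := ModS sat {φ'}
  have htop := ModS_union_singleton_inter sat (T := T) h1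
  have hfamily : {B | ∃ A ∈ Cφ, B = A ∩ N ∧ A ∩ N ≠ TrivS sat} =
      {B ∈ (· ∩ N) '' Cφ | TrivS sat ⊂ B} := by
    ext B
    constructor
    · rintro ⟨A, hA, rfl, hne⟩
      have htriv : TrivS sat ⊆ A ∩ N :=
        Set.subset_inter (hC.triv_lt A hA).1 (TrivS_subset_ModS sat _)
      exact ⟨⟨A, hA, rfl⟩, htriv.ssubset_of_ne hne.symm⟩
    · rintro ⟨⟨A, hA, rfl⟩, htriv⟩
      exact ⟨A, hA, rfl, htriv.ne'⟩
  rw [hfamily]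
  refine ⟨?_, fun B hB => hB.2, ?_, ?_, ?_⟩
  · rintro _ ⟨⟨A, hA, rfl⟩, -⟩
    exact htop ▸ Set.inter_subset_inter_left N (hC.subset_mod A hA)
  · rintro S hS ⟨B, hB⟩
    exact ⟨sUnion_mem_image_inter hC.union_closed (fun B hB => (hS hB).1) ⟨B, hB⟩,
      (hS hB).2.trans_subset (Set.subset_sUnion_of_mem hB)⟩
  · refine ⟨⟨_, hC.top_mem, htop⟩, ?_⟩
    exact (TrivS_subset_ModS sat _).ssubset_of_ne h2.symm
  · exact (wellFoundedOn_image_inter hC.union_closed hC.wf).subset fun B hB => hB.1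

theorem stmt_6 (sat : M → Sen → Prop) (T : Set Sen) (hT : T.Finite)
    (φ φ' : Sen) (Cφ : Set (Set M)) (hC : IsCutting sat T φ Cφ)
    (h1 : ModS sat {φ'} ⊆ ModS sat {φ})
    (h2 : ModS sat (T ∪ {φ'}) ≠ TrivS sat) :
    IsCutting sat T φ'
      {B | ∃ A ∈ Cφ, B = A ∩ ModS sat {φ'} ∧ A ∩ ModS sat {φ'} ≠ TrivS sat} :=
  stmt_6_general sat T φ φ' Cφ hC h1 h2
end

section
/- Let C_φ be a cutting for a knowledge base T and φ, let φ ∧ φ' be a semantic conjunction, and assume that Triv ⊊ 𝕄 ∩ Mod(φ') for every 𝕄 ∈ C_φ. Then C_{φ∧φ'} = {𝕄 ∩ Mod(φ') | 𝕄 ∈ C_φ} is a cutting for T and φ ∧ φ', and if φ ∧ φ' ▷ ψ (with respect to C_{φ∧φ'}) then φ ▷ ψ (with respect to C_φ). (Rational cut E-R-Cut.) -/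
variable {Sen M : Type*}

/-!
Intersecting with `Mod(φ')` maps the cutting `C_φ` onto `C_{φ∧φ'}`, and this map has a monotone
right inverse: a member `B` of the image lifts to the union of all members of `C_φ` whose trace on
`Mod(φ')` lies in `B`. That lift is strictly monotone, so descending chains of `C_{φ∧φ'}` lift to
descending chains of `C_φ`; and a minimal member of `C_φ` below the lift of a minimal `B` traces
back exactly onto `B`, so every explanation for `φ ∧ φ'` is one for `φ`.
-/

theorem modS_union (sat : M → Sen → Prop) (T U : Set Sen) :
    ModS sat (T ∪ U) = ModS sat T ∩ ModS sat U := by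
  ext m
  simp only [ModS, Set.mem_union, or_imp, forall_and, Set.mem_ofPred_eq, Set.mem_inter_iff]

theorem exists_mem_minCut_subset {C : Set (Set M)} (hwf : C.WellFoundedOn (fun A B => A ⊂ B))
    {X : Set M} (hX : X ∈ C) : ∃ A ∈ MinCut C, A ⊆ X := by
  obtain ⟨A, ⟨hAC, hAX⟩, hAmin⟩ :=
    (hwf.subset (fun _ hB => hB.1 : {B | B ∈ C ∧ B ⊆ X} ⊆ C)).exists_minimal ⟨X, hX, le_rfl⟩
  exact ⟨A, ⟨hAC, fun B hB hBA => hBA.not_subset (hAmin ⟨hB, hBA.subset.trans hAX⟩ hBA.subset)⟩,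
    hAX⟩

namespace Set

variable {α : Type*} (C : Set (Set α)) (P : Set α)

/-- For `C` closed under unions, the largest member of `C` whose trace on `P` lies in `B`. -/
def liftInter (B : Set α) : Set α := ⋃₀ {A ∈ C | A ∩ P ⊆ B}

variable {C P}

theorem liftInter_mono {B B' : Set α} (h : B ⊆ B') : liftInter C P B ⊆ liftInter C P B' :=
  sUnion_subset_sUnion fun _ hA => ⟨hA.1, hA.2.trans h⟩

theorem liftInter_inter_eq {B : Set α} (hB : B ∈ (· ∩ P) '' C) : liftInter C P B ∩ P = B := by
  obtain ⟨A, hA, rfl⟩ := hB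
  refine Subset.antisymm ?_ fun x hx => ⟨⟨A, ⟨hA, subset_rfl⟩, hx.1⟩, hx.2⟩
  rintro x ⟨⟨X, ⟨-, hXA⟩, hxX⟩, hxP⟩
  exact hXA ⟨hxX, hxP⟩

theorem liftInter_mem (hunion : ∀ S ⊆ C, S.Nonempty → ⋃₀ S ∈ C) {B : Set α}
    (hB : B ∈ (· ∩ P) '' C) : liftInter C P B ∈ C := by
  obtain ⟨A, hA, rfl⟩ := hB
  exact hunion _ (fun _ hX => hX.1) ⟨A, hA, subset_rfl⟩

theorem liftInter_strictMonoOn : StrictMonoOn (liftInter C P) ((· ∩ P) '' C) := by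
  intro B hB B' hB' hlt
  refine ssubset_of_subset_not_subset (liftInter_mono hlt.subset) fun hle => hlt.not_subset ?_
  rw [← liftInter_inter_eq hB, ← liftInter_inter_eq hB']
  exact inter_subset_inter_left P hle

theorem sUnion_mem_image_inter (hunion : ∀ S ⊆ C, S.Nonempty → ⋃₀ S ∈ C)
    {S : Set (Set α)} (hS : S ⊆ (· ∩ P) '' C) (hne : S.Nonempty) :
    ⋃₀ S ∈ (· ∩ P) '' C := by
  refine ⟨⋃₀ {A ∈ C | A ∩ P ∈ S}, ?_, ?_⟩
  · obtain ⟨B, hB⟩ := hne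
    obtain ⟨A, hA, rfl⟩ := hS hB
    exact hunion _ (fun _ hX => hX.1) ⟨A, hA, hB⟩
  · refine Subset.antisymm ?_ ?_
    · rintro x ⟨⟨A, ⟨-, hAS⟩, hxA⟩, hxP⟩
      exact ⟨A ∩ P, hAS, hxA, hxP⟩
    · rintro x ⟨B, hBS, hxB⟩
      obtain ⟨A, hA, rfl⟩ := hS hBS
      exact ⟨⟨A, ⟨hA, hBS⟩, hxB.1⟩, hxB.2⟩

theorem wellFoundedOn_image_inter (hunion : ∀ S ⊆ C, S.Nonempty → ⋃₀ S ∈ C)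
    (hwf : C.WellFoundedOn (fun A B => A ⊂ B)) :
    ((· ∩ P) '' C).WellFoundedOn (fun A B => A ⊂ B) := by
  have hlift : (liftInter C P '' ((· ∩ P) '' C)).WellFoundedOn (fun A B => A ⊂ B) :=
    hwf.subset (image_subset_iff.mpr fun _ hB => liftInter_mem hunion hB)
  exact (wellFoundedOn_image.mp hlift).mono' fun _ hB _ hB' => liftInter_strictMonoOn hB hB'

theorem exists_mem_minCut_inter_eq (hunion : ∀ S ⊆ C, S.Nonempty → ⋃₀ S ∈ C)
    (hwf : C.WellFoundedOn (fun A B => A ⊂ B)) {B : Set α} (hB : B ∈ MinCut ((· ∩ P) '' C)) :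
    ∃ A ∈ MinCut C, A ∩ P = B := by
  obtain ⟨A, hAmin, hAB⟩ := exists_mem_minCut_subset hwf (liftInter_mem hunion hB.1)
  have hsub : A ∩ P ⊆ B := by
    rw [← liftInter_inter_eq hB.1]
    exact inter_subset_inter_left P hAB
  refine ⟨A, hAmin, of_not_not fun hne => hB.2 _ ⟨A, hAmin.1, rfl⟩ ?_⟩
  exact ssubset_of_subset_not_subset hsub fun hle => hne (Subset.antisymm hsub hle)

end Set

theorem IsCutting.image_inter {sat : M → Sen → Prop} {T : Set Sen} {φ φ' χ : Sen}
    {C : Set (Set M)} (hC : IsCutting sat T φ C)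
    (hconj : ModS sat {χ} = ModS sat {φ} ∩ ModS sat {φ'})
    (htriv : ∀ A ∈ C, TrivS sat ⊂ A ∩ ModS sat {φ'}) :
    IsCutting sat T χ ((· ∩ ModS sat {φ'}) '' C) := by
  have hχ : ModS sat (T ∪ {χ}) = ModS sat (T ∪ {φ}) ∩ ModS sat {φ'} := by
    rw [modS_union, modS_union, hconj, Set.inter_assoc]
  refine ⟨?_, ?_, fun _ => Set.sUnion_mem_image_inter hC.union_closed, ⟨_, hC.top_mem, hχ.symm⟩,
    Set.wellFoundedOn_image_inter hC.union_closed hC.wf⟩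
  · rintro _ ⟨A, hA, rfl⟩
    rw [hχ]
    exact Set.inter_subset_inter_left _ (hC.subset_mod A hA)
  · rintro _ ⟨A, hA, rfl⟩
    exact htriv A hA

theorem ExplRel.of_image_inter {sat : M → Sen → Prop} {T : Set Sen} {φ : Sen} {ψ : Sen}
    {C : Set (Set M)} (hC : IsCutting sat T φ C) {P : Set M}
    (h : ExplRel sat T ((· ∩ P) '' C) ψ) : ExplRel sat T C ψ := by
  obtain ⟨hne, B, hBmin, hψB⟩ := h
  obtain ⟨A, hAmin, rfl⟩ := Set.exists_mem_minCut_inter_eq hC.union_closed hC.wf hBmin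
  exact ⟨hne, A, hAmin, hψB.trans Set.inter_subset_left⟩

theorem stmt_10_general (sat : M → Sen → Prop) (T : Set Sen)
    (φ φ' χ ψ : Sen) (Cφ : Set (Set M)) (hC : IsCutting sat T φ Cφ)
    (hconj : ModS sat {χ} = ModS sat {φ} ∩ ModS sat {φ'})
    (h : ∀ A ∈ Cφ, TrivS sat ⊂ A ∩ ModS sat {φ'}) :
    IsCutting sat T χ ((fun A => A ∩ ModS sat {φ'}) '' Cφ) ∧
      (ExplRel sat T ((fun A => A ∩ ModS sat {φ'}) '' Cφ) ψ → ExplRel sat T Cφ ψ) :=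
  ⟨hC.image_inter hconj h, ExplRel.of_image_inter hC⟩

theorem stmt_10 (sat : M → Sen → Prop) (T : Set Sen) (hT : T.Finite)
    (φ φ' χ ψ : Sen) (Cφ : Set (Set M)) (hC : IsCutting sat T φ Cφ)
    (hconj : ModS sat {χ} = ModS sat {φ} ∩ ModS sat {φ'})
    (h : ∀ A ∈ Cφ, TrivS sat ⊂ A ∩ ModS sat {φ'}) :
    IsCutting sat T χ ((fun A => A ∩ ModS sat {φ'}) '' Cφ) ∧
      (ExplRel sat T ((fun A => A ∩ ModS sat {φ'}) '' Cφ) ψ → ExplRel sat T Cφ ψ) :=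
  stmt_10_general sat T φ φ' χ ψ Cφ hC hconj h
end
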